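/- lc(P_4 × P_5) = 14 for the grid graph P_4 × P_5. -/

import Mathlib

/-!
Upper bound. Suppose no edge of `A` meets a different edge of `B`, where `|A| = |B| = 14`. Then
`A \ B`, `B \ A` and the matching `A ∩ B` span pairwise disjoint vertex sets, so one of
`S = A \ B`, `S = B \ A` spans a set `X` with `|X| + 2|A ∩ B| ≤ 10`. Sending an edge of the grid
to its lower end is injective on horizontal edges and misses the rightmost vertex of every row met
by `X`; likewise for vertical edges. Hence `|S| ≤ 2|X| - r - c` where `X` meets `r ≤ 4` rows and
`c ≤ 5` columns, and as `|X| ≤ rc` this gives `|S| ≤ |X| + 3`, so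
`14 = |S| + |A ∩ B| ≤ |X| + 3 + |A ∩ B| ≤ 13`.

Lower bound. The 13 edges inside rows 1–2 and the 13 edges inside rows 3–4 are vertex-disjoint.
-/

open SimpleGraph

def shareVertex {V : Type*} (e f : Sym2 V) : Prop := ∃ v, v ∈ e ∧ v ∈ f

def SuperLineComplete {V : Type*} (G : SimpleGraph V) (r : ℕ) : Prop :=
  ∀ A B : Finset (Sym2 V), ↑A ⊆ G.edgeSet → ↑B ⊆ G.edgeSet →
    A.card = r → B.card = r → A ≠ B →
    ∃ e ∈ A, ∃ f ∈ B, e ≠ f ∧ shareVertex e f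

def lcIs {V : Type*} (G : SimpleGraph V) (k : ℕ) : Prop :=
  IsLeast {r : ℕ | 0 < r ∧ SuperLineComplete G r} k

def gridGraph (n m : ℕ) : SimpleGraph (Fin n × Fin m) :=
  (pathGraph n).boxProd (pathGraph m)

open Finset

theorem card_add_card_image_le {α V ι β : Type*} [DecidableEq V] [DecidableEq ι]
    [LinearOrder β]
    {S : Finset α} {X : Finset V} (f : α → V) (p : V → ι) (g : V → β)
    (hf : Set.InjOn f S) (hfX : ∀ a ∈ S, f a ∈ X)
    (hlt : ∀ a ∈ S, ∃ w ∈ X, p w = p (f a) ∧ g (f a) < g w) :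
    #S + #(X.image p) ≤ #X := by
  have hT : S.image f ⊆ X := image_subset_iff.mpr hfX
  have hfibre_max : Set.SurjOn p ↑(X \ S.image f) ↑(X.image p) := by
    intro i hi
    obtain ⟨v, hv, hvi⟩ := mem_image.mp hi
    obtain ⟨u, hu, hmax⟩ :=
      (X.filter (p · = i)).exists_max_image g ⟨v, mem_filter.mpr ⟨hv, hvi⟩⟩
    rw [mem_filter] at hu
    refine ⟨u, mem_sdiff.mpr ⟨hu.1, fun huT => ?_⟩, hu.2⟩
    obtain ⟨a, ha, rfl⟩ := mem_image.mp huT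
    obtain ⟨w, hw, hpw, hgw⟩ := hlt a ha
    exact (hmax w (mem_filter.mpr ⟨hw, hpw.trans hu.2⟩)).not_gt hgw
  have hfibres := card_le_card_of_surjOn p hfibre_max
  have hTX := card_le_card hT
  rw [card_sdiff_of_subset hT, card_image_of_injOn hf] at hfibres
  rw [card_image_of_injOn hf] at hTX
  omega

def edgeSupport {V : Type*} [DecidableEq V] (S : Finset (Sym2 V)) : Finset V :=
  S.biUnion Sym2.toFinset

theorem mem_edgeSupport {V : Type*} [DecidableEq V] {S : Finset (Sym2 V)} {v : V} :
    v ∈ edgeSupport S ↔ ∃ e ∈ S, v ∈ e := by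
  simp [edgeSupport, Sym2.mem_toFinset]

section SuperLine

variable {V : Type*} (G : SimpleGraph V)

theorem disjoint_edgeSupport [DecidableEq V] {A B X Y : Finset (Sym2 V)}
    (hAB : ∀ e ∈ A, ∀ f ∈ B, ∀ v ∈ e, v ∈ f → e = f)
    (hX : X ⊆ A) (hY : Y ⊆ B) (hXY : Disjoint X Y) :
    Disjoint (edgeSupport X) (edgeSupport Y) := by
  refine disjoint_left.mpr fun v hvX hvY => ?_
  obtain ⟨e, he, hve⟩ := mem_edgeSupport.mp hvX
  obtain ⟨f, hf, hvf⟩ := mem_edgeSupport.mp hvY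
  exact disjoint_left.mp hXY he (hAB e (hX he) f (hY hf) v hve hvf ▸ hf)

theorem card_edgeSupport_of_pairwise_disjoint [DecidableEq V] {M : Finset (Sym2 V)}
    (hM : ↑M ⊆ G.edgeSet) (hdisj : (M : Set (Sym2 V)).PairwiseDisjoint Sym2.toFinset) :
    #(edgeSupport M) = 2 * #M := by
  rw [edgeSupport, card_biUnion hdisj, sum_congr rfl fun e he =>
    Sym2.card_toFinset_of_not_isDiag e (G.not_isDiag_of_mem_edgeSet (hM he)), sum_const,
    smul_eq_mul, mul_comm]

theorem superLineComplete_of_card_le_card_edgeSupport_add [Fintype V] [DecidableEq V] {k r : ℕ}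
    (hG : ∀ S : Finset (Sym2 V), ↑S ⊆ G.edgeSet →
      2 * #(edgeSupport S) ≤ Fintype.card V → #S ≤ #(edgeSupport S) + k)
    (hr : Fintype.card V + 2 * k < 2 * r) : SuperLineComplete G r := by
  intro A B hA hB hcA hcB _
  by_contra! hsh
  have hAB : ∀ e ∈ A, ∀ f ∈ B, ∀ v ∈ e, v ∈ f → e = f := fun e he f hf v hve hvf =>
    by_contra fun hef => hsh e he f hf hef ⟨v, hve, hvf⟩
  have hST := disjoint_edgeSupport hAB sdiff_subset sdiff_subset disjoint_sdiff_sdiff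
  have hSM := disjoint_edgeSupport hAB sdiff_subset inter_subset_right
    (disjoint_sdiff_inter A B)
  have hTM := disjoint_edgeSupport (fun f hf e he v hvf hve => (hAB e he f hf v hve hvf).symm)
    sdiff_subset inter_subset_left (by rw [inter_comm]; exact disjoint_sdiff_inter B A)
  have hM : #(edgeSupport (A ∩ B)) = 2 * #(A ∩ B) := by
    refine card_edgeSupport_of_pairwise_disjoint G (fun e he => hA (mem_inter.mp he).1) ?_
    intro e he f hf hef
    simpa [edgeSupport] using disjoint_edgeSupport hAB
      (singleton_subset_iff.mpr (mem_inter.mp he).1) (singleton_subset_iff.mpr (mem_inter.mp hf).2)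
      (disjoint_singleton.mpr hef)
  have htotal : #(edgeSupport (A \ B)) + #(edgeSupport (B \ A)) + #(edgeSupport (A ∩ B))
      ≤ Fintype.card V := by
    rw [← card_union_of_disjoint hST, ← card_union_of_disjoint
      (disjoint_union_left.mpr ⟨hSM, hTM⟩)]
    exact card_le_univ _
  have hcS : #(A \ B) + #(A ∩ B) = r := by rw [card_sdiff_add_card_inter, hcA]
  have hcT : #(B \ A) + #(A ∩ B) = r := by rw [inter_comm, card_sdiff_add_card_inter, hcB]
  rcases le_total #(edgeSupport (A \ B)) #(edgeSupport (B \ A)) with h | h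
  · have := hG (A \ B) (fun e he => hA (mem_sdiff.mp he).1) (by omega)
    omega
  · have := hG (B \ A) (fun e he => hB (mem_sdiff.mp he).1) (by omega)
    omega

theorem not_superLineComplete_of_forall_not_shareVertex {E₁ E₂ : Finset (Sym2 V)}
    (h₁ : ↑E₁ ⊆ G.edgeSet) (h₂ : ↑E₂ ⊆ G.edgeSet)
    (hE : ∀ e ∈ E₁, ∀ f ∈ E₂, ¬ shareVertex e f) {r : ℕ} (hr : 0 < r)
    (hr₁ : r ≤ #E₁) (hr₂ : r ≤ #E₂) : ¬ SuperLineComplete G r := by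
  intro hG
  obtain ⟨A, hA, hcA⟩ := exists_subset_card_eq hr₁
  obtain ⟨B, hB, hcB⟩ := exists_subset_card_eq hr₂
  have hAB : A ≠ B := by
    obtain ⟨e, he⟩ := card_pos.mp (hcA ▸ hr)
    rintro rfl
    exact hE e (hA he) e (hB he) ⟨e.out.1, e.out_fst_mem, e.out_fst_mem⟩
  obtain ⟨e, he, f, hf, -, hsh⟩ :=
    hG A B ((coe_subset.mpr hA).trans h₁) ((coe_subset.mpr hB).trans h₂) hcA hcB hAB
  exact hE e (hA he) f (hB hf) hsh

end SuperLine

theorem gridGraph_adj {n m : ℕ} {u v : Fin n × Fin m} :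
    (gridGraph n m).Adj u v ↔
      u.1 = v.1 ∧ (u.2.val + 1 = v.2.val ∨ v.2.val + 1 = u.2.val) ∨
      u.2 = v.2 ∧ (u.1.val + 1 = v.1.val ∨ v.1.val + 1 = u.1.val) := by
  rw [gridGraph, boxProd_adj, pathGraph_adj, pathGraph_adj]
  tauto

instance (n m : ℕ) : DecidableRel (gridGraph n m).Adj := fun _ _ =>
  decidable_of_iff _ gridGraph_adj.symm

namespace gridGraph

theorem eq_inf_sup_of_mem_edgeSet {n m : ℕ} {e : Sym2 (Fin n × Fin m)}
    (he : e ∈ (gridGraph n m).edgeSet) :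
    e = s(e.inf, e.sup) ∧
      (e.inf.1 = e.sup.1 ∧ e.inf.2.val + 1 = e.sup.2.val ∨
        e.inf.2 = e.sup.2 ∧ e.inf.1.val + 1 = e.sup.1.val) := by
  induction e using Sym2.ind with
  | _ u v =>
    rw [mem_edgeSet, gridGraph_adj] at he
    simp only [Sym2.inf_mk, Sym2.sup_mk, Prod.fst_inf, Prod.snd_inf, Prod.fst_sup, Prod.snd_sup,
      Sym2.eq_iff, Prod.ext_iff, Fin.ext_iff, Fin.coe_min, Fin.coe_max]
    omega

theorem eq_of_inf_eq {n m : ℕ} {e f : Sym2 (Fin n × Fin m)}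
    (he : e ∈ (gridGraph n m).edgeSet) (hf : f ∈ (gridGraph n m).edgeSet)
    (hinf : e.inf = f.inf) (hdir : e.inf.1 = e.sup.1 ↔ f.inf.1 = f.sup.1) : e = f := by
  obtain ⟨he, hedir⟩ := eq_inf_sup_of_mem_edgeSet he
  obtain ⟨hf, hfdir⟩ := eq_inf_sup_of_mem_edgeSet hf
  have hsup : e.sup = f.sup := by
    simp only [Prod.ext_iff, Fin.ext_iff] at hinf hdir hedir hfdir ⊢
    omega
  rw [he, hf, hinf, hsup]

theorem card_add_card_image_fst_add_card_image_snd_le {n m : ℕ}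
    {S : Finset (Sym2 (Fin n × Fin m))} (hS : ↑S ⊆ (gridGraph n m).edgeSet) :
    #S + #((edgeSupport S).image Prod.fst) + #((edgeSupport S).image Prod.snd) ≤
      2 * #(edgeSupport S) := by
  have hmem : ∀ e ∈ S, e.inf ∈ edgeSupport S ∧ e.sup ∈ edgeSupport S := fun e he => by
    have hinf := Sym2.mem_mk_left e.inf e.sup
    have hsup := Sym2.mem_mk_right e.inf e.sup
    rw [← (eq_inf_sup_of_mem_edgeSet (hS he)).1] at hinf hsup
    exact ⟨mem_edgeSupport.mpr ⟨e, he, hinf⟩, mem_edgeSupport.mpr ⟨e, he, hsup⟩⟩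
  have hrows : #(S.filter fun e => e.inf.1 = e.sup.1) + #((edgeSupport S).image Prod.fst) ≤
      #(edgeSupport S) := by
    refine card_add_card_image_le Sym2.inf Prod.fst Prod.snd ?_
      (fun e he => (hmem e (mem_filter.mp he).1).1) fun e he => ?_
    · intro e he f hf hinf
      rw [mem_coe, mem_filter] at he hf
      exact eq_of_inf_eq (hS he.1) (hS hf.1) hinf (iff_of_true he.2 hf.2)
    · rw [mem_filter] at he
      refine ⟨e.sup, (hmem e he.1).2, he.2.symm, ?_⟩
      have hdir := (eq_inf_sup_of_mem_edgeSet (hS he.1)).2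
      simp only [Fin.ext_iff, Fin.lt_def] at he hdir ⊢
      omega
  have hcols : #(S.filter fun e => ¬ e.inf.1 = e.sup.1) + #((edgeSupport S).image Prod.snd) ≤
      #(edgeSupport S) := by
    refine card_add_card_image_le Sym2.inf Prod.snd Prod.fst ?_
      (fun e he => (hmem e (mem_filter.mp he).1).1) fun e he => ?_
    · intro e he f hf hinf
      rw [mem_coe, mem_filter] at he hf
      exact eq_of_inf_eq (hS he.1) (hS hf.1) hinf (iff_of_false he.2 hf.2)
    · rw [mem_filter] at he
      have hdir := (eq_inf_sup_of_mem_edgeSet (hS he.1)).2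
      refine ⟨e.sup, (hmem e he.1).2, ?_, ?_⟩ <;>
      · simp only [Fin.ext_iff, Fin.lt_def] at he hdir ⊢
        omega
  have := card_filter_add_card_filter_not (s := S) (fun e => e.inf.1 = e.sup.1)
  omega

theorem card_le_card_edgeSupport_add_three {S : Finset (Sym2 (Fin 4 × Fin 5))}
    (hS : ↑S ⊆ (gridGraph 4 5).edgeSet) (hsmall : #(edgeSupport S) ≤ 10) :
    #S ≤ #(edgeSupport S) + 3 := by
  have hgrid := card_add_card_image_fst_add_card_image_snd_le hS
  set X := edgeSupport S
  have hrc : #X ≤ #(X.image Prod.fst) * #(X.image Prod.snd) := by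
    rw [← card_product]
    exact card_le_card fun v hv =>
      mem_product.mpr ⟨mem_image_of_mem _ hv, mem_image_of_mem _ hv⟩
  have hr : #(X.image Prod.fst) ≤ 4 := card_le_univ _
  have hc : #(X.image Prod.snd) ≤ 5 := card_le_univ _
  generalize #(X.image Prod.fst) = r at *
  interval_cases r <;> omega

theorem superLineComplete_four_five : SuperLineComplete (gridGraph 4 5) 14 :=
  superLineComplete_of_card_le_card_edgeSupport_add _ (k := 3)
    (fun _ hS hsmall => card_le_card_edgeSupport_add_three hS <| by
      rw [Fintype.card_prod, Fintype.card_fin, Fintype.card_fin] at hsmall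
      omega)
    (by decide)

theorem not_superLineComplete_four_five {r : ℕ} (hr : 0 < r) (hr13 : r ≤ 13) :
    ¬ SuperLineComplete (gridGraph 4 5) r :=
  not_superLineComplete_of_forall_not_shareVertex _
    (E₁ := (gridGraph 4 5).edgeFinset.filter fun e => ∀ v ∈ e, v.1 < 2)
    (E₂ := (gridGraph 4 5).edgeFinset.filter fun e => ∀ v ∈ e, 2 ≤ v.1)
    (fun _ he => mem_edgeFinset.mp (mem_filter.mp he).1)
    (fun _ he => mem_edgeFinset.mp (mem_filter.mp he).1)
    (fun _ he _ hf ⟨v, hve, hvf⟩ =>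
      ((mem_filter.mp he).2 v hve).not_ge ((mem_filter.mp hf).2 v hvf))
    hr (hr13.trans_eq (by decide)) (hr13.trans_eq (by decide))

end gridGraph

theorem lc_grid_four_five : lcIs (gridGraph 4 5) 14 :=
  ⟨⟨by norm_num, gridGraph.superLineComplete_four_five⟩, fun r ⟨hr, hcomplete⟩ =>
    not_lt.mp fun hlt => gridGraph.not_superLineComplete_four_five hr (by omega) hcomplete⟩
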